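/- Let v ∈ ℝ² and let O = {g·v : g ∈ G} be its orbit under G. If O has cardinality 3, then each of the three lines {(x,y) ∈ ℝ² : y = 0}, {(x,y) : y = √3·x}, and {(x,y) : y = −√3·x} contains exactly one point of O (in particular O is contained in the union of these three lines). If O has cardinality 6, then O is disjoint from the union of these three lines. -/

import Mathlib

open Complex

noncomputable def rotPerm : Equiv.Perm ℂ :=
  Equiv.mulLeft₀ (Complex.exp (2 * Real.pi * Complex.I / 3)) (Complex.exp_ne_zero _)

noncomputable def conjPerm : Equiv.Perm ℂ :=
  ⟨fun z => (starRingEnd ℂ) z, fun z => (starRingEnd ℂ) z,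
    fun z => by simp, fun z => by simp⟩

noncomputable def dihedralG : Subgroup (Equiv.Perm ℂ) :=
  Subgroup.closure {rotPerm, conjPerm}

def Gorbit (v : ℂ) : Set ℂ := {z : ℂ | ∃ g ∈ dihedralG, g v = z}

/-- The three mirror lines of the reflections in the dihedral group:
`y = 0`, `y = √3·x` and `y = -√3·x` (identifying ℝ² with ℂ). -/
def mirror0 : Set ℂ := {z : ℂ | z.im = 0}
def mirror1 : Set ℂ := {z : ℂ | z.im = Real.sqrt 3 * z.re}
def mirror2 : Set ℂ := {z : ℂ | z.im = -(Real.sqrt 3) * z.re}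

/-!
Every element of the group acts as `z ↦ ζ * z` or `z ↦ ζ * conj z` with `ζ ^ 3 = 1`, so the orbit
of `v` is the union of the rotation orbits of `v` and `conj v`; these coincide or are disjoint, and
have three points each when `v ≠ 0`. The mirrors are the lines `η * conj z = z` with `η ^ 3 = 1`,
and `z` lies on one of them iff `conj z` is a rotate of `z`, a property shared by all points of an
orbit. So an orbit of size 6, where `conj v` is not a rotate of `v`, misses the mirrors. On an orbit
`{ζ * v}` of size 3 with `conj v = μ * v`, the point `ζ * v` lies on the mirror of `η` iff
`η * μ * ζ = 1`, i.e. iff `ζ = (η * μ) ^ 2`.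
-/

theorem Subgroup.mem_closure_pair_of_conj_eq_inv {G : Type*} [Group G] {r s g : G}
    (hs : s * s = 1) (hsr : s * r * s⁻¹ = r⁻¹) :
    g ∈ Subgroup.closure {r, s} ↔ ∃ k : ℤ, g = r ^ k ∨ g = r ^ k * s := by
  have hs' : s⁻¹ = s := inv_eq_of_mul_eq_one_right hs
  have hsrk (k : ℤ) : s * r ^ k = r ^ (-k) * s := by
    rw [zpow_neg, ← inv_zpow, ← hsr, conj_zpow, inv_mul_cancel_right]
  constructor
  · intro hg
    induction hg using Subgroup.closure_induction with
    | mem x hx =>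
      rcases hx with rfl | rfl
      · exact ⟨1, .inl (zpow_one x).symm⟩
      · exact ⟨0, .inr (by simp)⟩
    | one => exact ⟨0, .inl (zpow_zero r).symm⟩
    | mul x y _ _ hx hy =>
      obtain ⟨a, rfl | rfl⟩ := hx <;> obtain ⟨b, rfl | rfl⟩ := hy
      · exact ⟨a + b, .inl (zpow_add r a b).symm⟩
      · exact ⟨a + b, .inr (by rw [zpow_add, mul_assoc])⟩
      · exact ⟨a - b, .inr (by rw [mul_assoc, hsrk, ← mul_assoc, ← zpow_add, sub_eq_add_neg])⟩
      · exact ⟨a - b, .inl (by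
          rw [mul_assoc, ← mul_assoc s, hsrk, mul_assoc, hs, mul_one, ← zpow_add, sub_eq_add_neg])⟩
    | inv x _ hx =>
      obtain ⟨a, rfl | rfl⟩ := hx
      · exact ⟨-a, .inl (zpow_neg r a).symm⟩
      · exact ⟨a, .inr (by rw [mul_inv_rev, hs', ← zpow_neg, hsrk, neg_neg])⟩
  · rintro ⟨k, rfl | rfl⟩
    · exact zpow_mem (subset_closure (Set.mem_insert r _)) k
    · exact mul_mem (zpow_mem (subset_closure (Set.mem_insert r _)) k)
        (subset_closure (Set.mem_insert_of_mem r rfl))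

open ComplexConjugate

local notation "ω" => Complex.exp (2 * Real.pi * Complex.I / 3)

lemma isPrimitiveRoot_ω : IsPrimitiveRoot ω 3 := by
  simpa using Complex.isPrimitiveRoot_exp 3 (by norm_num)

lemma ω_eq : ω = ⟨-1 / 2, Real.sqrt 3 / 2⟩ := by
  have h : 2 * Real.pi * I / 3 = (Real.pi - Real.pi / 3 : ℝ) * I := by push_cast; ring
  rw [h, exp_mul_I, ← ofReal_cos, ← ofReal_sin, Real.cos_pi_sub, Real.sin_pi_sub,
    Real.cos_pi_div_three, Real.sin_pi_div_three]
  apply Complex.ext <;> norm_num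

lemma conj_eq_sq_of_pow_three_eq_one {ζ : ℂ} (h : ζ ^ 3 = 1) : conj ζ = ζ ^ 2 := by
  rw [← inv_eq_conj (norm_eq_one_of_pow_eq_one h (by norm_num)), inv_eq_of_mul_eq_one_right]
  rw [← pow_succ', h]

/-- The mirror of the reflection `z ↦ η * conj z`. -/
def fixedLine (η : ℂ) : Set ℂ := {z | η * conj z = z}

lemma mirror0_eq : mirror0 = fixedLine 1 := by
  ext z; simp [mirror0, fixedLine, conj_eq_iff_im]

lemma mirror1_eq : mirror1 = fixedLine ω := by
  ext z
  have h3 : Real.sqrt 3 ^ 2 = 3 := Real.sq_sqrt (by norm_num)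
  simp only [mirror1, fixedLine, Set.mem_ofPred_eq, ω_eq, Complex.ext_iff, mul_re, mul_im,
    conj_re, conj_im]
  constructor
  · intro h
    constructor
    · linear_combination (Real.sqrt 3 / 2) * h + (z.re / 2) * h3
    · linear_combination (-1 / 2) * h
  · rintro ⟨-, h⟩
    linear_combination -2 * h

lemma mirror2_eq : mirror2 = fixedLine (ω ^ 2) := by
  ext z
  have h3 : Real.sqrt 3 ^ 2 = 3 := Real.sq_sqrt (by norm_num)
  rw [← conj_eq_sq_of_pow_three_eq_one isPrimitiveRoot_ω.pow_eq_one]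
  simp only [mirror2, fixedLine, Set.mem_ofPred_eq, ω_eq, Complex.ext_iff, mul_re, mul_im,
    conj_re, conj_im]
  constructor
  · intro h
    constructor
    · linear_combination (-Real.sqrt 3 / 2) * h + (z.re / 2) * h3
    · linear_combination (-1 / 2) * h
  · rintro ⟨-, h⟩
    linear_combination -2 * h

lemma rotPerm_zpow_apply (k : ℤ) (z : ℂ) : (rotPerm ^ k) z = ω ^ k * z := by
  have h : rotPerm = MulAction.toPermHom ℂˣ ℂ (Units.mk0 ω (exp_ne_zero _)) := rfl
  rw [h, ← map_zpow, MulAction.toPermHom_apply, MulAction.toPerm_apply, Units.smul_def,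
    Units.val_zpow_eq_zpow_val, Units.val_mk0, smul_eq_mul]

lemma conjPerm_mul_self : conjPerm * conjPerm = 1 :=
  Equiv.ext fun z => conj_conj z

lemma conjPerm_mul_rotPerm_mul_inv : conjPerm * rotPerm * conjPerm⁻¹ = rotPerm⁻¹ := by
  ext z
  rw [← zpow_neg_one rotPerm, rotPerm_zpow_apply, zpow_neg_one,
    inv_eq_conj (norm_eq_one_of_pow_eq_one isPrimitiveRoot_ω.pow_eq_one three_ne_zero)]
  simp [conjPerm, rotPerm]

lemma exists_zpow_ω_eq_iff {ζ : ℂ} : (∃ k : ℤ, ω ^ k = ζ) ↔ ζ ^ 3 = 1 := by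
  constructor
  · rintro ⟨k, rfl⟩
    rw [← zpow_natCast, ← zpow_mul, mul_comm k, zpow_mul, zpow_natCast,
      isPrimitiveRoot_ω.pow_eq_one, one_zpow]
  · intro h
    obtain ⟨i, -, rfl⟩ := isPrimitiveRoot_ω.eq_pow_of_pow_eq_one h
    exact ⟨i, zpow_natCast ω i⟩

def rotOrbit (v : ℂ) : Set ℂ := (· * v) '' {ζ : ℂ | ζ ^ 3 = 1}

lemma Gorbit_eq_union (v : ℂ) : Gorbit v = rotOrbit v ∪ rotOrbit (conj v) := by
  ext z
  simp only [Gorbit, dihedralG, Subgroup.mem_closure_pair_of_conj_eq_inv conjPerm_mul_self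
    conjPerm_mul_rotPerm_mul_inv, rotOrbit, Set.mem_union, Set.mem_image, Set.mem_ofPred_eq,
    ← exists_zpow_ω_eq_iff]
  constructor
  · rintro ⟨g, ⟨k, rfl | rfl⟩, rfl⟩
    · exact .inl ⟨_, ⟨k, rfl⟩, (rotPerm_zpow_apply k v).symm⟩
    · exact .inr ⟨_, ⟨k, rfl⟩, (rotPerm_zpow_apply k _).symm⟩
  · rintro (⟨_, ⟨k, rfl⟩, rfl⟩ | ⟨_, ⟨k, rfl⟩, rfl⟩)
    · exact ⟨_, ⟨k, .inl rfl⟩, rotPerm_zpow_apply k v⟩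
    · exact ⟨_, ⟨k, .inr rfl⟩, rotPerm_zpow_apply k _⟩

lemma setOf_pow_three_eq_one : {ζ : ℂ | ζ ^ 3 = 1} = Polynomial.nthRootsFinset 3 (1 : ℂ) := by
  ext ζ
  simp

lemma ncard_rotOrbit_le (v : ℂ) : (rotOrbit v).ncard ≤ 3 := by
  refine (Set.ncard_image_le ?_).trans ?_ <;> rw [setOf_pow_three_eq_one]
  · exact Finset.finite_toSet _
  · rw [Set.ncard_coe_finset, isPrimitiveRoot_ω.card_nthRootsFinset]

lemma ncard_rotOrbit {v : ℂ} (hv : v ≠ 0) : (rotOrbit v).ncard = 3 := by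
  rw [rotOrbit, Set.ncard_image_of_injective _ (mul_left_injective₀ hv), setOf_pow_three_eq_one,
    Set.ncard_coe_finset, isPrimitiveRoot_ω.card_nthRootsFinset]

lemma rotOrbit_finite (v : ℂ) : (rotOrbit v).Finite := by
  rw [rotOrbit, setOf_pow_three_eq_one]
  exact (Finset.finite_toSet _).image _

lemma rotOrbit_subset_of_mem {v w : ℂ} (h : w ∈ rotOrbit v) : rotOrbit w ⊆ rotOrbit v := by
  rintro _ ⟨ξ, hξ : ξ ^ 3 = 1, rfl⟩
  obtain ⟨ζ, hζ : ζ ^ 3 = 1, rfl⟩ := h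
  exact ⟨ξ * ζ, by rw [Set.mem_ofPred_eq, mul_pow, hξ, hζ, one_mul], by ring⟩

lemma disjoint_rotOrbit_of_notMem {v w : ℂ} (h : w ∉ rotOrbit v) :
    Disjoint (rotOrbit v) (rotOrbit w) := by
  refine Set.disjoint_left.mpr ?_
  rintro _ ⟨ζ, hζ : ζ ^ 3 = 1, rfl⟩ ⟨ξ, hξ : ξ ^ 3 = 1, hw : ξ * w = ζ * v⟩
  refine h ⟨ξ ^ 2 * ζ, ?_, ?_⟩
  · rw [Set.mem_ofPred_eq, mul_pow, pow_right_comm, hξ, hζ, one_pow, one_mul]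
  · linear_combination -ξ ^ 2 * hw + w * hξ

lemma ncard_Gorbit_of_conj_notMem {v : ℂ} (hv : v ≠ 0) (h : conj v ∉ rotOrbit v) :
    (Gorbit v).ncard = 6 := by
  rw [Gorbit_eq_union, Set.ncard_union_eq (disjoint_rotOrbit_of_notMem h) (rotOrbit_finite _)
    (rotOrbit_finite _), ncard_rotOrbit hv, ncard_rotOrbit ((map_ne_zero _).mpr hv)]

lemma Gorbit_eq_rotOrbit {v : ℂ} (h : conj v ∈ rotOrbit v) : Gorbit v = rotOrbit v := by
  rw [Gorbit_eq_union, Set.union_eq_left.mpr (rotOrbit_subset_of_mem h)]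

lemma conj_mem_rotOrbit_of_mem_fixedLine {η z : ℂ} (hη : η ^ 3 = 1) (hz : η * conj z = z) :
    conj z ∈ rotOrbit z :=
  ⟨η ^ 2, by rw [Set.mem_ofPred_eq, pow_right_comm, hη, one_pow], by
    linear_combination -η ^ 2 * hz + conj z * hη⟩

lemma conj_mem_rotOrbit_of_mem_Gorbit {v z : ℂ} (hz : z ∈ Gorbit v)
    (h : conj z ∈ rotOrbit z) : conj v ∈ rotOrbit v := by
  obtain ⟨μ, hμ : μ ^ 3 = 1, hμz⟩ := h
  rw [Gorbit_eq_union] at hz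
  rcases hz with ⟨ζ, hζ : ζ ^ 3 = 1, rfl⟩ | ⟨ζ, hζ : ζ ^ 3 = 1, rfl⟩ <;>
    rw [map_mul, conj_eq_sq_of_pow_three_eq_one hζ] at hμz
  · refine ⟨μ * ζ ^ 2, ?_, ?_⟩
    · rw [Set.mem_ofPred_eq, mul_pow, pow_right_comm, hμ, hζ, one_pow, one_mul]
    · linear_combination ζ * hμz + conj v * hζ
  · rw [conj_conj] at hμz
    refine ⟨μ ^ 2 * ζ, ?_, ?_⟩
    · rw [Set.mem_ofPred_eq, mul_pow, pow_right_comm, hμ, hζ, one_pow, one_mul]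
    · linear_combination -μ ^ 2 * ζ ^ 2 * hμz + (μ ^ 3 * conj v - μ ^ 2 * ζ * v) * hζ + conj v * hμ

lemma disjoint_Gorbit_fixedLine {v η : ℂ} (h : conj v ∉ rotOrbit v) (hη : η ^ 3 = 1) :
    Disjoint (Gorbit v) (fixedLine η) :=
  Set.disjoint_left.mpr fun _ hzv hzη =>
    h (conj_mem_rotOrbit_of_mem_Gorbit hzv (conj_mem_rotOrbit_of_mem_fixedLine hη hzη))

lemma rotOrbit_zero : rotOrbit 0 = {0} := by
  simp only [rotOrbit, mul_zero]
  exact Set.Nonempty.image_const (s := {ζ : ℂ | ζ ^ 3 = 1}) ⟨1, one_pow 3⟩ 0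

lemma existsUnique_mem_rotOrbit_inter_fixedLine {v η : ℂ} (hv : v ≠ 0) (h : conj v ∈ rotOrbit v)
    (hη : η ^ 3 = 1) : ∃! z, z ∈ rotOrbit v ∩ fixedLine η := by
  obtain ⟨μ, hμ : μ ^ 3 = 1, hμv : μ * v = conj v⟩ := h
  refine ⟨(η * μ) ^ 2 * v, ⟨⟨(η * μ) ^ 2, ?_, rfl⟩, ?_⟩, ?_⟩
  · rw [Set.mem_ofPred_eq, pow_right_comm, mul_pow, hη, hμ, one_mul, one_pow]
  · change η * conj ((η * μ) ^ 2 * v) = (η * μ) ^ 2 * v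
    rw [map_mul, map_pow, map_mul, conj_eq_sq_of_pow_three_eq_one hη,
      conj_eq_sq_of_pow_three_eq_one hμ, ← hμv]
    linear_combination η ^ 2 * μ ^ 2 * v * (μ ^ 3 * hη + hμ)
  · rintro _ ⟨⟨ζ, hζ : ζ ^ 3 = 1, rfl⟩, hz : η * conj (ζ * v) = ζ * v⟩
    rw [map_mul, conj_eq_sq_of_pow_three_eq_one hζ, ← hμv] at hz
    have h1 : η * μ * ζ ^ 2 = ζ := mul_right_cancel₀ hv (by linear_combination hz)
    have h2 : η * μ * ζ = 1 := by linear_combination ζ ^ 2 * h1 - (η * μ * ζ - 1) * hζ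
    have h3 : ζ = (η * μ) ^ 2 := by
      linear_combination (η * μ) ^ 2 * hζ - ζ * (η * μ * ζ + 1) * h2
    rw [h3]

theorem orbit_three_six_mirrors (v : ℂ) :
    ((Gorbit v).ncard = 3 →
      ((∃! p, p ∈ Gorbit v ∩ mirror0) ∧ (∃! p, p ∈ Gorbit v ∩ mirror1) ∧
        (∃! p, p ∈ Gorbit v ∩ mirror2))) ∧
    ((Gorbit v).ncard = 6 → Gorbit v ∩ (mirror0 ∪ mirror1 ∪ mirror2) = ∅) := by
  have hω : ω ^ 3 = 1 := isPrimitiveRoot_ω.pow_eq_one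
  have hω2 : (ω ^ 2) ^ 3 = 1 := by rw [pow_right_comm, hω, one_pow]
  rw [mirror0_eq, mirror1_eq, mirror2_eq]
  constructor
  · intro h3
    have hv : v ≠ 0 := by
      rintro rfl
      simp [Gorbit_eq_union, rotOrbit_zero] at h3
    have hc : conj v ∈ rotOrbit v := by
      by_contra hc
      rw [ncard_Gorbit_of_conj_notMem hv hc] at h3
      omega
    rw [Gorbit_eq_rotOrbit hc]
    exact ⟨existsUnique_mem_rotOrbit_inter_fixedLine hv hc (one_pow 3),
      existsUnique_mem_rotOrbit_inter_fixedLine hv hc hω,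
      existsUnique_mem_rotOrbit_inter_fixedLine hv hc hω2⟩
  · intro h6
    have hc : conj v ∉ rotOrbit v := by
      intro hc
      have := ncard_rotOrbit_le v
      rw [← Gorbit_eq_rotOrbit hc, h6] at this
      omega
    rw [← Set.disjoint_iff_inter_eq_empty, Set.disjoint_union_right, Set.disjoint_union_right]
    exact ⟨⟨disjoint_Gorbit_fixedLine hc (one_pow 3), disjoint_Gorbit_fixedLine hc hω⟩,
      disjoint_Gorbit_fixedLine hc hω2⟩
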